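/- Let u, v : Ω → ℝ be smooth, let α ∈ ℝ with α ≠ 0, and suppose u₁ and v₁ vanish nowhere on Ω. If u₃·v₁ = α·(v₂ − v₃)·u₁ and u₄·v₁ = α·(v₃ − v₄)·u₁ hold identically on Ω, then the functions m := (v₂ − v₃)/v₁ and n := (v₃ − v₄)/v₁ satisfy m₄ + α·m·n₁ = n₃ + α·n·m₁ on Ω. -/

import Mathlib

/-- Partial derivative of `F : ℝ⁴ → ℝ` in the `i`-th coordinate direction. -/
noncomputable def pd (i : Fin 4) (F : (Fin 4 → ℝ) → ℝ) : (Fin 4 → ℝ) → ℝ :=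
  fun x => fderiv ℝ F x (Pi.single i 1)

/-!
Dividing the two equations by `v₁` gives `u₃ = α m u₁` and `u₄ = α n u₁`. Computing `u₃₄ = u₄₃`
from these, and expanding the mixed derivatives `u₁₄`, `u₁₃` through the same two equations, the
terms in `u₁₁` cancel and what is left is `α (m₄ + α m n₁ - n₃ - α n m₁) u₁ = 0`.
-/

open Filter Topology

section PartialDerivatives

variable {f g : (Fin 4 → ℝ) → ℝ} {x : Fin 4 → ℝ}

theorem Filter.EventuallyEq.pd_eq (h : f =ᶠ[𝓝 x] g) (i : Fin 4) : pd i f x = pd i g x := by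
  simp only [pd, h.fderiv_eq]

theorem pd_mul (i : Fin 4) (hf : DifferentiableAt ℝ f x) (hg : DifferentiableAt ℝ g x) :
    pd i (fun y => f y * g y) x = pd i f x * g x + f x * pd i g x := by
  simp only [pd, fderiv_fun_mul hf hg, add_apply, smul_apply, smul_eq_mul]
  ring

theorem pd_const_mul (i : Fin 4) (c : ℝ) (hf : DifferentiableAt ℝ f x) :
    pd i (fun y => c * f y) x = c * pd i f x := by
  simp only [pd, fderiv_const_mul hf c, smul_apply, smul_eq_mul]

theorem ContDiffAt.differentiableAt_pd (hf : ContDiffAt ℝ 2 f x) (i : Fin 4) :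
    DifferentiableAt ℝ (pd i f) x :=
  ((hf.fderiv_right (m := 1) le_rfl).differentiableAt one_ne_zero).clm_apply
    (differentiableAt_const _)

theorem ContDiffAt.pd_comm (hf : ContDiffAt ℝ 2 f x) (i j : Fin 4) :
    pd i (pd j f) x = pd j (pd i f) x := by
  have hdf : DifferentiableAt ℝ (fderiv ℝ f) x :=
    (hf.fderiv_right (m := 1) le_rfl).differentiableAt one_ne_zero
  have hsymm := hf.isSymmSndFDerivAt (by simp [minSmoothness_of_isRCLikeNormedField])
  unfold pd
  rw [fderiv_clm_apply hdf (differentiableAt_const _),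
    fderiv_clm_apply hdf (differentiableAt_const _)]
  simpa using hsymm (Pi.single i 1) (Pi.single j 1)

end PartialDerivatives

theorem pd_add_mul_pd_eq_of_pd_eq_mul_pd {f a b : (Fin 4 → ℝ) → ℝ} {x : Fin 4 → ℝ}
    {i j k : Fin 4} (hf : ContDiffAt ℝ 2 f x) (ha : DifferentiableAt ℝ a x)
    (hb : DifferentiableAt ℝ b x) (hfk : pd k f x ≠ 0)
    (hfa : pd i f =ᶠ[𝓝 x] fun y => a y * pd k f y)
    (hfb : pd j f =ᶠ[𝓝 x] fun y => b y * pd k f y) :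
    pd j a x + a x * pd k b x = pd i b x + b x * pd k a x := by
  have hdfk := hf.differentiableAt_pd k
  have hji : pd j (pd i f) x = pd j a x * pd k f x + a x * pd k (pd j f) x := by
    rw [hfa.pd_eq, pd_mul j ha hdfk, hf.pd_comm j k]
  have hij : pd i (pd j f) x = pd i b x * pd k f x + b x * pd k (pd i f) x := by
    rw [hfb.pd_eq, pd_mul i hb hdfk, hf.pd_comm i k]
  have hki : pd k (pd i f) x = pd k a x * pd k f x + a x * pd k (pd k f) x := by
    rw [hfa.pd_eq, pd_mul k ha hdfk]
  have hkj : pd k (pd j f) x = pd k b x * pd k f x + b x * pd k (pd k f) x := by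
    rw [hfb.pd_eq, pd_mul k hb hdfk]
  apply mul_right_cancel₀ hfk
  linear_combination -hji + hij - a x * hkj + b x * hki - hf.pd_comm i j

-- The paper's coordinate `xⁱ` has index `i - 1` here, so `u₃` is `pd 2 u`.
/-- Elimination of `u` from the Segre type [111] system `u₃v₁ = α(v₂ − v₃)u₁`,
`u₄v₁ = α(v₃ − v₄)u₁` yields `m₄ + α m n₁ = n₃ + α n m₁` for
`m = (v₂ − v₃)/v₁`, `n = (v₃ − v₄)/v₁`.  Coordinates `x¹,…,x⁴` are indexed by `0,…,3`. -/
theorem statement9 (Ω : Set (Fin 4 → ℝ)) (hΩ : IsOpen Ω)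
    (u v : (Fin 4 → ℝ) → ℝ)
    (hu : ContDiffOn ℝ (⊤ : ℕ∞) u Ω) (hv : ContDiffOn ℝ (⊤ : ℕ∞) v Ω)
    (α : ℝ) (hα : α ≠ 0)
    (hu1 : ∀ x ∈ Ω, pd 0 u x ≠ 0) (hv1 : ∀ x ∈ Ω, pd 0 v x ≠ 0)
    (heq1 : ∀ x ∈ Ω, pd 2 u x * pd 0 v x = α * (pd 1 v x - pd 2 v x) * pd 0 u x)
    (heq2 : ∀ x ∈ Ω, pd 3 u x * pd 0 v x = α * (pd 2 v x - pd 3 v x) * pd 0 u x) :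
    ∀ x ∈ Ω,
      pd 3 (fun y => (pd 1 v y - pd 2 v y) / pd 0 v y) x
        + α * ((pd 1 v x - pd 2 v x) / pd 0 v x)
            * pd 0 (fun y => (pd 2 v y - pd 3 v y) / pd 0 v y) x
      = pd 2 (fun y => (pd 2 v y - pd 3 v y) / pd 0 v y) x
        + α * ((pd 2 v x - pd 3 v x) / pd 0 v x)
            * pd 0 (fun y => (pd 1 v y - pd 2 v y) / pd 0 v y) x := by
  intro x hx
  set m := fun y => (pd 1 v y - pd 2 v y) / pd 0 v y
  set n := fun y => (pd 2 v y - pd 3 v y) / pd 0 v y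
  have hΩx : Ω ∈ 𝓝 x := hΩ.mem_nhds hx
  have hux : ContDiffAt ℝ 2 u x := (hu.contDiffAt hΩx).of_le (WithTop.coe_le_coe.mpr le_top)
  have hvx : ContDiffAt ℝ 2 v x := (hv.contDiffAt hΩx).of_le (WithTop.coe_le_coe.mpr le_top)
  have hv0 := (hvx.differentiableAt_pd 0).fun_inv (hv1 x hx)
  have hm : DifferentiableAt ℝ m x := by
    simpa only [m, div_eq_mul_inv] using
      ((hvx.differentiableAt_pd 1).fun_sub (hvx.differentiableAt_pd 2)).fun_mul hv0
  have hn : DifferentiableAt ℝ n x := by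
    simpa only [n, div_eq_mul_inv] using
      ((hvx.differentiableAt_pd 2).fun_sub (hvx.differentiableAt_pd 3)).fun_mul hv0
  have hum : pd 2 u =ᶠ[𝓝 x] fun y => α * m y * pd 0 u y := by
    filter_upwards [hΩx] with y hy
    rw [eq_div_iff (hv1 y hy) |>.mpr (heq1 y hy)]
    ring
  have hun : pd 3 u =ᶠ[𝓝 x] fun y => α * n y * pd 0 u y := by
    filter_upwards [hΩx] with y hy
    rw [eq_div_iff (hv1 y hy) |>.mpr (heq2 y hy)]
    ring
  have hcompat := pd_add_mul_pd_eq_of_pd_eq_mul_pd hux (hm.const_mul α) (hn.const_mul α) (hu1 x hx)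
    hum hun
  rw [pd_const_mul 3 α hm, pd_const_mul 0 α hn, pd_const_mul 2 α hn, pd_const_mul 0 α hm] at hcompat
  apply mul_left_cancel₀ hα
  linear_combination hcompat
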